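/- In a system (S, (L_x), (Ω_{x,y})) satisfying the minimal axioms, for any x, y ∈ S, dom Φ_{x∧y,x} ∩ dom Φ_{x∧y,y} = dom Φ_{x∧y,x∨y}. -/

import Mathlib

/-- A partial bijection from `A` to `B`, modeled as a functional and injective
relation `R : A → B → Prop`.  Its domain is `rdom R` and its image is `rim R`. -/
def IsPartialBij {A : Type u} {B : Type v} (R : A → B → Prop) : Prop :=
  (∀ a b b', R a b → R a b' → b = b') ∧ (∀ a a' b, R a b → R a' b → a = a')

/-- The domain of a partial bijection (as a relation). -/
def rdom {A : Type u} {B : Type v} (R : A → B → Prop) : Set A := {a | ∃ b, R a b}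

/-- The image of a partial bijection (as a relation). -/
def rim {A : Type u} {B : Type v} (R : A → B → Prop) : Set B := {b | ∃ a, R a b}

/-- A (nonempty) filter of a lattice: an up-set closed under meets. -/
def IsLatFilter {A : Type u} [Lattice A] (F : Set A) : Prop :=
  F.Nonempty ∧ (∀ a ∈ F, ∀ b, a ≤ b → b ∈ F) ∧ (∀ a ∈ F, ∀ b ∈ F, a ⊓ b ∈ F)

/-- A (nonempty) ideal of a lattice: a down-set closed under joins. -/
def IsLatIdeal {A : Type u} [Lattice A] (I : Set A) : Prop :=
  I.Nonempty ∧ (∀ a ∈ I, ∀ b, b ≤ a → b ∈ I) ∧ (∀ a ∈ I, ∀ b ∈ I, a ⊔ b ∈ I)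

/-- A relation between lattices preserves joins and meets; together with
`IsPartialBij` this says the relation is a lattice isomorphism from its
domain onto its image. -/
def IsLatHomRel {A : Type u} {B : Type v} [Lattice A] [Lattice B]
    (R : A → B → Prop) : Prop :=
  (∀ a a' b b', R a b → R a' b' → R (a ⊔ a') (b ⊔ b')) ∧
  (∀ a a' b b', R a b → R a' b' → R (a ⊓ a') (b ⊓ b'))

/-- `ChainComp L Ω a b f` says there is a saturated chain
`a = x₀ ⋖ x₁ ⋖ ⋯ ⋖ xₙ = b` in `S` such that `f` is the composite
`Ω_{x_{n-1},x_n} ∘ ⋯ ∘ Ω_{x_0,x_1}` (the identity relation when `a = b`). -/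
inductive ChainComp {S : Type u} [Lattice S] (L : S → Type v)
    (Ω : ∀ x y : S, x ⋖ y → L x → L y → Prop) : ∀ a b : S, (L a → L b → Prop) → Prop
  | refl (a : S) : ChainComp L Ω a a (fun u v => u = v)
  | cons {a b c : S} (h : a ⋖ b) {f : L b → L c → Prop}
      (hf : ChainComp L Ω b c f) : ChainComp L Ω a c (Relation.Comp (Ω a b h) f)

/-- The minimal axioms for a polytone system `(S, (L x), Ω)`:
(PS1⁻) `S` is l.f.f.c.; (PS2⁻) the blocks are finite, modular, complemented;
(PS3⁻) each connection `Ω x y h` (for a cover `x ⋖ y`) is a partial bijection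
whose domain is a filter, whose image is an ideal, and which is a lattice
isomorphism; (PS6⁻∧), (PS7⁻∧), (PS8⁻∨) as in the paper. -/
def MinimalAxioms {S : Type u} [Lattice S] (L : S → Type v)
    [∀ x, Lattice (L x)] [∀ x, BoundedOrder (L x)]
    (Ω : ∀ x y : S, x ⋖ y → L x → L y → Prop) : Prop :=
  -- (PS1⁻) S is l.f.f.c.
  (∀ a b : S, (Set.Icc a b).Finite) ∧
  (∀ a : S, {b | a ⋖ b}.Finite) ∧
  (∀ a : S, {b | b ⋖ a}.Finite) ∧
  -- (PS2⁻) blocks are f.m.c.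
  (∀ x, Finite (L x)) ∧
  (∀ x, IsModularLattice (L x)) ∧
  (∀ x, ComplementedLattice (L x)) ∧
  -- (PS3⁻)
  (∀ x y : S, ∀ h : x ⋖ y, IsPartialBij (Ω x y h) ∧ IsLatFilter (rdom (Ω x y h)) ∧
    IsLatIdeal (rim (Ω x y h)) ∧ IsLatHomRel (Ω x y h)) ∧
  -- (PS6⁻∧)
  (∀ x y : S, ∀ (hx : x ⊓ y ⋖ x) (hy : x ⊓ y ⋖ y),
    ∃ (f : L x → L (x ⊔ y) → Prop) (g : L y → L (x ⊔ y) → Prop),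
      ChainComp L Ω x (x ⊔ y) f ∧ ChainComp L Ω y (x ⊔ y) g ∧
      Relation.Comp (Ω (x ⊓ y) x hx) f = Relation.Comp (Ω (x ⊓ y) y hy) g) ∧
  -- (PS7⁻∧)
  (∀ x y : S, ∀ (hx : x ⊓ y ⋖ x) (hy : x ⊓ y ⋖ y),
    ∃ h : L (x ⊓ y) → L (x ⊔ y) → Prop, ChainComp L Ω (x ⊓ y) (x ⊔ y) h ∧
      rdom (Ω (x ⊓ y) x hx) ∩ rdom (Ω (x ⊓ y) y hy) ⊆ rdom h) ∧
  -- (PS8⁻∨)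
  (∀ x y : S, ∀ (hx : x ⋖ x ⊔ y) (hy : y ⋖ x ⊔ y),
    ∃ h : L (x ⊓ y) → L (x ⊔ y) → Prop, ChainComp L Ω (x ⊓ y) (x ⊔ y) h ∧
      rim (Ω x (x ⊔ y) hx) ∩ rim (Ω y (x ⊔ y) hy) ⊆ rim h)

set_option linter.unusedSectionVars false

section Polytone

universe u v

variable {S : Type u} [Lattice S] {L : S → Type v}
    [∀ x, Lattice (L x)] [∀ x, BoundedOrder (L x)]
    {Ω : ∀ x y : S, x ⋖ y → L x → L y → Prop}

lemma PolyAux.chain_le {a b : S} {f : L a → L b → Prop}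
    (h : ChainComp L Ω a b f) : a ≤ b := by
  induction h with
  | refl a => exact le_rfl
  | cons h hf ih => exact h.le.trans ih

lemma PolyAux.comp_eq_left {A : Type*} {B : Type*} (g : A → B → Prop) :
    Relation.Comp (fun u v => u = v) g = g := by
  funext u w
  exact propext ⟨fun ⟨v, huv, hg⟩ => huv ▸ hg, fun hg => ⟨u, rfl, hg⟩⟩

lemma PolyAux.chain_comp {a b : S} {f : L a → L b → Prop}
    (h1 : ChainComp L Ω a b f) :
    ∀ {c : S} {g : L b → L c → Prop}, ChainComp L Ω b c g →
      ChainComp L Ω a c (Relation.Comp f g) := by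
  induction h1 with
  | refl a => intro c g h2; rwa [PolyAux.comp_eq_left]
  | cons h hf ih =>
      intro c g h2
      rw [Relation.comp_assoc]
      exact ChainComp.cons h (ih h2)

lemma PolyAux.chain_self_dom {a b : S} {f : L a → L b → Prop}
    (h : ChainComp L Ω a b f) (hba : b ≤ a) (u : L a) : u ∈ rdom f := by
  cases h with
  | refl => exact ⟨u, rfl⟩
  | cons h hf => exact absurd ((PolyAux.chain_le hf).trans hba) h.lt.not_ge

lemma PolyAux.mem_rdom_comp {A B C : Type*} {f : A → B → Prop} {g : B → C → Prop} {u : A} :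
    u ∈ rdom (Relation.Comp f g) ↔ ∃ v, f u v ∧ v ∈ rdom g :=
  ⟨fun ⟨w, v, h1, h2⟩ => ⟨v, h1, w, h2⟩, fun ⟨v, h1, w, h2⟩ => ⟨w, v, h1, h2⟩⟩

lemma PolyAux.rdom_comp_congr {A B C : Type*} {f : A → B → Prop} {g g' : B → C → Prop}
    (h : rdom g = rdom g') : rdom (Relation.Comp f g) = rdom (Relation.Comp f g') := by
  ext u
  rw [PolyAux.mem_rdom_comp, PolyAux.mem_rdom_comp, h]

lemma PolyAux.Icc_ssub {a x y z : S} (hax : a < x) (haz : a ≤ z) (hyz : y ≤ z) :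
    Set.Icc x y ⊂ Set.Icc a z := by
  constructor
  · rintro w ⟨h1, h2⟩; exact ⟨hax.le.trans h1, h2.trans hyz⟩
  · intro hsub
    exact absurd (hsub ⟨le_rfl, haz⟩).1 hax.not_ge

variable (hIcc : ∀ a b : S, (Set.Icc a b).Finite)

include hIcc in
lemma PolyAux.ncard_Icc_pos {a b : S} (hab : a ≤ b) : 0 < (Set.Icc a b).ncard :=
  (Set.ncard_pos (hIcc a b)).2 ⟨a, le_rfl, hab⟩

include hIcc in
lemma PolyAux.exists_covby_le {a c : S} (h : a < c) : ∃ d, a ⋖ d ∧ d ≤ c := by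
  have hfin : (Set.Ioc a c).Finite := (hIcc a c).subset Set.Ioc_subset_Icc_self
  obtain ⟨d, hd, hmin⟩ := Set.Finite.exists_minimalFor id (Set.Ioc a c) hfin ⟨c, h, le_rfl⟩
  refine ⟨d, ⟨hd.1, fun z haz hzd => ?_⟩, hd.2⟩
  exact hzd.not_ge (hmin ⟨haz, hzd.le.trans hd.2⟩ hzd.le)

include hIcc in
lemma PolyAux.exists_chain : ∀ n (a b : S), (Set.Icc a b).ncard ≤ n → a ≤ b →
    ∃ f, ChainComp L Ω a b f := by
  intro n
  induction n with
  | zero =>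
      intro a b hle hab
      exact absurd hle (PolyAux.ncard_Icc_pos hIcc hab).not_ge
  | succ n ih =>
      intro a b hle hab
      rcases hab.lt_or_eq with hlt | heq
      · obtain ⟨d, had, hdb⟩ := PolyAux.exists_covby_le hIcc hlt
        have hm : (Set.Icc d b).ncard ≤ n := by
          have := Set.ncard_lt_ncard (PolyAux.Icc_ssub had.lt hab le_rfl) (hIcc a b)
          omega
        obtain ⟨f, hf⟩ := ih d b hm hdb
        exact ⟨_, ChainComp.cons had hf⟩
      · subst heq; exact ⟨_, ChainComp.refl a⟩

variable (hPS6 : ∀ x y : S, ∀ (hx : x ⊓ y ⋖ x) (hy : x ⊓ y ⋖ y),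
    ∃ (f : L x → L (x ⊔ y) → Prop) (g : L y → L (x ⊔ y) → Prop),
      ChainComp L Ω x (x ⊔ y) f ∧ ChainComp L Ω y (x ⊔ y) g ∧
      Relation.Comp (Ω (x ⊓ y) x hx) f = Relation.Comp (Ω (x ⊓ y) y hy) g)

lemma PolyAux.meet_of_covby {a p q : S} (hp : a ⋖ p) (hq : a ⋖ q) (hne : p ≠ q) :
    p ⊓ q = a := by
  have h : a ≤ p ⊓ q := le_inf hp.le hq.le
  rcases (inf_le_left : p ⊓ q ≤ p).lt_or_eq with hlt | heq
  · rcases h.lt_or_eq with h' | h'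
    · exact absurd hlt (hp.2 h')
    · exact h'.symm
  · have hpq : p ≤ q := heq ▸ inf_le_right
    rcases hpq.lt_or_eq with h' | h'
    · exact absurd h' (hq.2 hp.lt)
    · exact absurd h' hne

include hIcc hPS6 in
lemma PolyAux.dom_indep : ∀ n (a b : S) (f g : L a → L b → Prop),
    (Set.Icc a b).ncard ≤ n → ChainComp L Ω a b f → ChainComp L Ω a b g →
      rdom f = rdom g := by
  intro n
  induction n with
  | zero =>
      intro a b f g hle hf _
      exact absurd hle (PolyAux.ncard_Icc_pos hIcc (PolyAux.chain_le hf)).not_ge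
  | succ n ih =>
      intro a b f g hle hf hg
      rcases (PolyAux.chain_le hf).lt_or_eq with hlt | heq
      · cases hf with
        | refl => exact absurd hlt (lt_irrefl a)
        | cons hs hf' =>
          cases hg with
          | refl => exact absurd hlt (lt_irrefl a)
          | cons ht hg' =>
            rename_i s f' t g'
            have hsb : s ≤ b := PolyAux.chain_le hf'
            have htb : t ≤ b := PolyAux.chain_le hg'
            by_cases hst : s = t
            · subst hst
              have hm : (Set.Icc s b).ncard ≤ n := by
                have := Set.ncard_lt_ncard (PolyAux.Icc_ssub hs.lt hlt.le le_rfl) (hIcc a b)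
                omega
              exact PolyAux.rdom_comp_congr (ih s b f' g' hm hf' hg')
            · have e : s ⊓ t = a := PolyAux.meet_of_covby hs ht hst
              subst e
              obtain ⟨p, q, hp, hq, heq6⟩ := hPS6 s t hs ht
              have hwb : s ⊔ t ≤ b := sup_le hsb htb
              obtain ⟨r, hr⟩ := PolyAux.exists_chain (L := L) (Ω := Ω) hIcc (Set.Icc (s ⊔ t) b).ncard
                (s ⊔ t) b le_rfl hwb
              have hms : (Set.Icc s b).ncard ≤ n := by
                have := Set.ncard_lt_ncard (PolyAux.Icc_ssub hs.lt hlt.le le_rfl)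
                  (hIcc (s ⊓ t) b)
                omega
              have hmt : (Set.Icc t b).ncard ≤ n := by
                have := Set.ncard_lt_ncard (PolyAux.Icc_ssub ht.lt hlt.le le_rfl)
                  (hIcc (s ⊓ t) b)
                omega
              calc rdom (Relation.Comp (Ω (s ⊓ t) s hs) f')
                  = rdom (Relation.Comp (Ω (s ⊓ t) s hs) (Relation.Comp p r)) :=
                    PolyAux.rdom_comp_congr
                      (ih s b f' (Relation.Comp p r) hms hf' (PolyAux.chain_comp hp hr))
                _ = rdom (Relation.Comp (Relation.Comp (Ω (s ⊓ t) s hs) p) r) := by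
                    rw [Relation.comp_assoc]
                _ = rdom (Relation.Comp (Relation.Comp (Ω (s ⊓ t) t ht) q) r) := by
                    rw [heq6]
                _ = rdom (Relation.Comp (Ω (s ⊓ t) t ht) (Relation.Comp q r)) := by
                    rw [Relation.comp_assoc]
                _ = rdom (Relation.Comp (Ω (s ⊓ t) t ht) g') :=
                    PolyAux.rdom_comp_congr
                      (ih t b (Relation.Comp q r) g' hmt (PolyAux.chain_comp hq hr) hg')
      · subst heq
        ext u
        show u ∈ rdom f ↔ u ∈ rdom g
        exact ⟨fun _ => PolyAux.chain_self_dom hg le_rfl u,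
               fun _ => PolyAux.chain_self_dom hf le_rfl u⟩

/-- `u` is in the domain of some (equiv., every) chain composite from `a` to `b`. -/
def PolyAux.InDom (L : S → Type v) (Ω : ∀ x y : S, x ⋖ y → L x → L y → Prop)
    (a b : S) (u : L a) : Prop :=
  ∃ f, ChainComp L Ω a b f ∧ u ∈ rdom f

include hIcc hPS6 in
lemma PolyAux.mem_rdom_iff {a b : S} {f : L a → L b → Prop}
    (hc : ChainComp L Ω a b f) {u : L a} :
    u ∈ rdom f ↔ PolyAux.InDom L Ω a b u := by
  refine ⟨fun h => ⟨f, hc, h⟩, fun ⟨g, hg, hu⟩ => ?_⟩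
  rw [PolyAux.dom_indep hIcc hPS6 (Set.Icc a b).ncard a b f g le_rfl hc hg]
  exact hu

include hIcc hPS6 in
lemma PolyAux.indom_of_le {a b c : S} (hab : a ≤ b) (hbc : b ≤ c) {u : L a}
    (h : PolyAux.InDom L Ω a c u) : PolyAux.InDom L Ω a b u := by
  obtain ⟨g, hg⟩ := PolyAux.exists_chain (L := L) (Ω := Ω) hIcc _ a b le_rfl hab
  obtain ⟨h', hh'⟩ := PolyAux.exists_chain (L := L) (Ω := Ω) hIcc _ b c le_rfl hbc
  have hu : u ∈ rdom (Relation.Comp g h') :=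
    (PolyAux.mem_rdom_iff hIcc hPS6 (PolyAux.chain_comp hg hh')).2 h
  obtain ⟨v, hv, -⟩ := PolyAux.mem_rdom_comp.1 hu
  exact ⟨g, hg, v, hv⟩

include hIcc hPS6 in
lemma PolyAux.step {a s b : S} (h : a ⋖ s) (hsb : s ≤ b) {u : L a}
    (hu : PolyAux.InDom L Ω a b u) :
    ∃ v, Ω a s h u v ∧ PolyAux.InDom L Ω s b v := by
  obtain ⟨g, hg⟩ := PolyAux.exists_chain (L := L) (Ω := Ω) hIcc _ s b le_rfl hsb
  have hu' : u ∈ rdom (Relation.Comp (Ω a s h) g) :=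
    (PolyAux.mem_rdom_iff hIcc hPS6 (ChainComp.cons h hg)).2 hu
  obtain ⟨v, hv1, hv2⟩ := PolyAux.mem_rdom_comp.1 hu'
  exact ⟨v, hv1, g, hg, hv2⟩

lemma PolyAux.unstep {a s b : S} (h : a ⋖ s) {u : L a} {v : L s}
    (hv : Ω a s h u v) (hvb : PolyAux.InDom L Ω s b v) : PolyAux.InDom L Ω a b u := by
  obtain ⟨g, hg, hvg⟩ := hvb
  exact ⟨_, ChainComp.cons h hg, PolyAux.mem_rdom_comp.2 ⟨v, hv, hvg⟩⟩

variable (hPS7 : ∀ x y : S, ∀ (hx : x ⊓ y ⋖ x) (hy : x ⊓ y ⋖ y),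
    ∃ h : L (x ⊓ y) → L (x ⊔ y) → Prop, ChainComp L Ω (x ⊓ y) (x ⊔ y) h ∧
      rdom (Ω (x ⊓ y) x hx) ∩ rdom (Ω (x ⊓ y) y hy) ⊆ rdom h)

include hPS7 in
lemma PolyAux.diamond {a p q : S} (hp : a ⋖ p) (hq : a ⋖ q) (hne : p ≠ q) {u : L a}
    (h1 : u ∈ rdom (Ω a p hp)) (h2 : u ∈ rdom (Ω a q hq)) :
    PolyAux.InDom L Ω a (p ⊔ q) u := by
  have e : p ⊓ q = a := PolyAux.meet_of_covby hp hq hne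
  subst e
  obtain ⟨h, hchain, hsub⟩ := hPS7 p q hp hq
  exact ⟨h, hchain, hsub ⟨h1, h2⟩⟩

variable (hfun : ∀ (x y : S) (h : x ⋖ y) (a : L x) (b b' : L y),
    Ω x y h a b → Ω x y h a b' → b = b')

include hIcc hPS6 hPS7 hfun in
lemma PolyAux.main : ∀ n (a b c : S), (Set.Icc a (b ⊔ c)).ncard ≤ n → a ≤ b → a ≤ c →
    ∀ u : L a, PolyAux.InDom L Ω a b u → PolyAux.InDom L Ω a c u →
      PolyAux.InDom L Ω a (b ⊔ c) u := by
  intro n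
  induction n with
  | zero =>
      intro a b c hle hab hac
      exact absurd hle (PolyAux.ncard_Icc_pos hIcc (hab.trans le_sup_left)).not_ge
  | succ n ih =>
      intro a b c hle hab hac u hub huc
      rcases hab.lt_or_eq with hab' | hab'
      swap
      · subst hab'; rwa [sup_eq_right.2 hac]
      rcases hac.lt_or_eq with hac' | hac'
      swap
      · subst hac'; rwa [sup_eq_left.2 hab]
      obtain ⟨c₁, hac₁, hc₁c⟩ := PolyAux.exists_covby_le hIcc hac'
      have habc : a ≤ b ⊔ c := hab.trans le_sup_left
      by_cases hc₁b : c₁ ≤ b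
      · -- c₁ below b: step through c₁ on both sides
        obtain ⟨v, hΩv, hvb⟩ := PolyAux.step hIcc hPS6 hac₁ hc₁b hub
        obtain ⟨v', hΩv', hvc⟩ := PolyAux.step hIcc hPS6 hac₁ hc₁c huc
        have hvv : v = v' := hfun _ _ _ _ _ _ hΩv hΩv'
        subst hvv
        have hm : (Set.Icc c₁ (b ⊔ c)).ncard ≤ n := by
          have := Set.ncard_lt_ncard (PolyAux.Icc_ssub hac₁.lt habc le_rfl) (hIcc a (b ⊔ c))
          omega
        exact PolyAux.unstep hac₁ hΩv (ih c₁ b c hm hc₁b hc₁c v hvb hvc)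
      · obtain ⟨b₁, hab₁, hb₁b⟩ := PolyAux.exists_covby_le hIcc hab'
        have hne : b₁ ≠ c₁ := fun h => hc₁b (h ▸ hb₁b)
        obtain ⟨v, hΩbv, hv_b⟩ := PolyAux.step hIcc hPS6 hab₁ hb₁b hub
        obtain ⟨v₁, hΩcv₁, hv₁c⟩ := PolyAux.step hIcc hPS6 hac₁ hc₁c huc
        -- diamond
        have hdia : PolyAux.InDom L Ω a (b₁ ⊔ c₁) u :=
          PolyAux.diamond hPS7 hab₁ hac₁ hne ⟨v, hΩbv⟩ ⟨v₁, hΩcv₁⟩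
        -- v ∈ InDom b₁ (b₁ ⊔ c₁)
        obtain ⟨v₂, hΩbv₂, hv₂w⟩ := PolyAux.step hIcc hPS6 hab₁ le_sup_left hdia
        have hveq : v = v₂ := hfun _ _ _ _ _ _ hΩbv hΩbv₂
        subst hveq
        -- first IH application: at (b₁, b, b₁ ⊔ c₁)
        have hsup1 : b ⊔ (b₁ ⊔ c₁) = b ⊔ c₁ := by
          rw [← sup_assoc, sup_of_le_left hb₁b]
        have hm1 : (Set.Icc b₁ (b ⊔ (b₁ ⊔ c₁))).ncard ≤ n := by
          rw [hsup1]
          have hss : Set.Icc b₁ (b ⊔ c₁) ⊂ Set.Icc a (b ⊔ c) :=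
            PolyAux.Icc_ssub hab₁.lt habc (sup_le_sup_left hc₁c b)
          have := Set.ncard_lt_ncard hss (hIcc a (b ⊔ c))
          omega
        have hv_bc₁ : PolyAux.InDom L Ω b₁ (b ⊔ (b₁ ⊔ c₁)) v :=
          ih b₁ b (b₁ ⊔ c₁) hm1 hb₁b le_sup_left v hv_b hv₂w
        rw [hsup1] at hv_bc₁
        have hu_bc₁ : PolyAux.InDom L Ω a (b ⊔ c₁) u := PolyAux.unstep hab₁ hΩbv hv_bc₁
        -- step through c₁ from (b ⊔ c₁)
        obtain ⟨v₃, hΩcv₃, hv₃⟩ := PolyAux.step hIcc hPS6 hac₁ le_sup_right hu_bc₁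
        have hveq' : v₁ = v₃ := hfun _ _ _ _ _ _ hΩcv₁ hΩcv₃
        subst hveq'
        -- second IH application: at (c₁, b ⊔ c₁, c)
        have hsup2 : (b ⊔ c₁) ⊔ c = b ⊔ c := by
          rw [sup_assoc, sup_of_le_right hc₁c]
        have hm2 : (Set.Icc c₁ ((b ⊔ c₁) ⊔ c)).ncard ≤ n := by
          rw [hsup2]
          have := Set.ncard_lt_ncard (PolyAux.Icc_ssub hac₁.lt habc le_rfl) (hIcc a (b ⊔ c))
          omega
        have hv₁bc : PolyAux.InDom L Ω c₁ ((b ⊔ c₁) ⊔ c) v₁ :=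
          ih c₁ (b ⊔ c₁) c hm2 le_sup_right hc₁c v₁ hv₃ hv₁c
        rw [hsup2] at hv₁bc
        exact PolyAux.unstep hac₁ hΩcv₁ hv₁bc

end Polytone

theorem dom_inter_dom_eq_dom {S : Type u} [Lattice S] (L : S → Type v)
    [∀ x, Lattice (L x)] [∀ x, BoundedOrder (L x)]
    (Ω : ∀ x y : S, x ⋖ y → L x → L y → Prop)
    (hmin : MinimalAxioms L Ω)
    (Φ : ∀ x y : S, x ≤ y → (L x → L y → Prop))
    (hΦ : ∀ x y : S, ∀ h : x ≤ y, ChainComp L Ω x y (Φ x y h)) :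
    ∀ x y : S,
      rdom (Φ (x ⊓ y) x inf_le_left) ∩ rdom (Φ (x ⊓ y) y inf_le_right) =
        rdom (Φ (x ⊓ y) (x ⊔ y) (inf_le_left.trans le_sup_left)) := by
  obtain ⟨hIcc, -, -, -, -, -, hPS3, hPS6, hPS7, -⟩ := hmin
  have hfun : ∀ (a b : S) (h : a ⋖ b) (p : L a) (q q' : L b),
      Ω a b h p q → Ω a b h p q' → q = q' :=
    fun a b h p q q' => (hPS3 a b h).1.1 p q q'
  intro x y
  ext u
  constructor
  · rintro ⟨h1, h2⟩
    have hx : PolyAux.InDom L Ω (x ⊓ y) x u :=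
      (PolyAux.mem_rdom_iff hIcc hPS6 (hΦ (x ⊓ y) x inf_le_left)).1 h1
    have hy : PolyAux.InDom L Ω (x ⊓ y) y u :=
      (PolyAux.mem_rdom_iff hIcc hPS6 (hΦ (x ⊓ y) y inf_le_right)).1 h2
    have hmain := PolyAux.main hIcc hPS6 hPS7 hfun (Set.Icc (x ⊓ y) (x ⊔ y)).ncard
      (x ⊓ y) x y le_rfl inf_le_left inf_le_right u hx hy
    exact (PolyAux.mem_rdom_iff hIcc hPS6
      (hΦ (x ⊓ y) (x ⊔ y) (inf_le_left.trans le_sup_left))).2 hmain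
  · intro h
    have h' : PolyAux.InDom L Ω (x ⊓ y) (x ⊔ y) u :=
      (PolyAux.mem_rdom_iff hIcc hPS6
        (hΦ (x ⊓ y) (x ⊔ y) (inf_le_left.trans le_sup_left))).1 h
    exact ⟨(PolyAux.mem_rdom_iff hIcc hPS6 (hΦ (x ⊓ y) x inf_le_left)).2
        (PolyAux.indom_of_le hIcc hPS6 inf_le_left le_sup_left h'),
      (PolyAux.mem_rdom_iff hIcc hPS6 (hΦ (x ⊓ y) y inf_le_right)).2
        (PolyAux.indom_of_le hIcc hPS6 inf_le_right le_sup_right h')⟩
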